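/- Let u, v : ℝ^d × [0,T] → ℝ^d, σ ∈ ℝ^{d×d} constant, f C¹, and V C² with σᵀ∇V = u + v (Nelson's relation). Then the integrand identity div(f + σu) + σᵀ∇V · (u − w) − (1/2)‖σᵀ∇V‖² − Tr(σσᵀ∇²V) = div(f − σv) − (u+v)·(w + (v−u)/2) − Tr(σσᵀ∇²V) + div(σ(u+v)) − div(σ(u+v)) holds pointwise; in particular, using div(σ(u+v)) = div(σσᵀ∇V) = Tr(σσᵀ∇²V), we get div(f + σu) + σᵀ∇V·(u − w) − (1/2)‖σᵀ∇V‖² − Tr(σσᵀ∇²V) = div(f − σv) − (u+v)·(w + (v−u)/2). -/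

import Mathlib

open Real MeasureTheory Set

/-- Spatial partial derivative in direction `i`. -/
noncomputable def pder {d : ℕ} (i : Fin d) (f : (Fin d → ℝ) → ℝ) (x : Fin d → ℝ) : ℝ :=
  fderiv ℝ f x (Pi.single i 1)

/-- Spatial divergence of a vector field. -/
noncomputable def divg {d : ℕ} (F : (Fin d → ℝ) → Fin d → ℝ) (x : Fin d → ℝ) : ℝ :=
  ∑ i, pder i (fun y => F y i) x

/-- Second partial derivative ∂_i ∂_j f. -/
noncomputable def hess2 {d : ℕ} (f : (Fin d → ℝ) → ℝ) (x : Fin d → ℝ) (i j : Fin d) : ℝ :=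
  pder i (fun y => pder j f y) x

/-- Tr(A ∇²f)(x). -/
noncomputable def trHess {d : ℕ} (A : Matrix (Fin d) (Fin d) ℝ) (f : (Fin d → ℝ) → ℝ)
    (x : Fin d → ℝ) : ℝ :=
  ∑ i, ∑ j, A i j * hess2 f x i j

/-- ‖σᵀ ∇f‖²(x). -/
noncomputable def sigGradSq {d : ℕ} (σ : Matrix (Fin d) (Fin d) ℝ) (f : (Fin d → ℝ) → ℝ)
    (x : Fin d → ℝ) : ℝ :=
  ∑ j, (∑ i, σ i j * pder i f x) ^ 2

/-!
The two integrands differ by `div(σu) + div(σv) − Tr(σσᵀ∇²V)` plus a pointwise quadratic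
expression in `u + v`, `u` and `w`. Differentiating Nelson's relation `σᵀ∇V = u + v` gives
`div(σ(u + v)) = div(σσᵀ∇V) = Tr(σσᵀ∇²V)`, so the first part vanishes; the quadratic part
vanishes by completing the square.
-/

section PartialDerivatives

variable {d : ℕ} {x : Fin d → ℝ}

theorem pder_add {g h : (Fin d → ℝ) → ℝ} (hg : DifferentiableAt ℝ g x)
    (hh : DifferentiableAt ℝ h x) (i : Fin d) :
    pder i (fun y => g y + h y) x = pder i g x + pder i h x := by
  simp only [pder, fderiv_fun_add hg hh, add_apply]

theorem pder_sub {g h : (Fin d → ℝ) → ℝ} (hg : DifferentiableAt ℝ g x)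
    (hh : DifferentiableAt ℝ h x) (i : Fin d) :
    pder i (fun y => g y - h y) x = pder i g x - pder i h x := by
  simp only [pder, fderiv_fun_sub hg hh, sub_apply]

theorem pder_linearCombination {ι : Type*} [Fintype ι] (c : ι → ℝ)
    {g : ι → (Fin d → ℝ) → ℝ} (hg : ∀ j, DifferentiableAt ℝ (g j) x) (i : Fin d) :
    pder i (fun y => ∑ j, c j * g j y) x = ∑ j, c j * pder i (g j) x := by
  simp only [pder, fderiv_fun_sum fun j _ => (hg j).const_mul (c j), fderiv_const_mul (hg _),
    sum_apply, smul_apply, smul_eq_mul]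

theorem differentiable_pder {g : (Fin d → ℝ) → ℝ} (hg : ContDiff ℝ 2 g) (i : Fin d) :
    Differentiable ℝ (pder i g) :=
  ((hg.fderiv_right (m := 1) (by norm_num)).clm_apply contDiff_const).differentiable
    one_ne_zero

end PartialDerivatives

section Divergence

variable {d : ℕ} {x : Fin d → ℝ}

theorem divg_add {F G : (Fin d → ℝ) → Fin d → ℝ} (hF : ∀ i, DifferentiableAt ℝ (F · i) x)
    (hG : ∀ i, DifferentiableAt ℝ (G · i) x) :
    divg (fun y i => F y i + G y i) x = divg F x + divg G x := by
  simp only [divg, pder_add (hF _) (hG _), Finset.sum_add_distrib]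

theorem divg_sub {F G : (Fin d → ℝ) → Fin d → ℝ} (hF : ∀ i, DifferentiableAt ℝ (F · i) x)
    (hG : ∀ i, DifferentiableAt ℝ (G · i) x) :
    divg (fun y i => F y i - G y i) x = divg F x - divg G x := by
  simp only [divg, pder_sub (hF _) (hG _), Finset.sum_sub_distrib]

theorem differentiableAt_matrix_mulVec (σ : Matrix (Fin d) (Fin d) ℝ)
    {U : (Fin d → ℝ) → Fin d → ℝ} (hU : ∀ j, DifferentiableAt ℝ (U · j) x) (i : Fin d) :
    DifferentiableAt ℝ (fun y => ∑ j, σ i j * U y j) x := by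
  fun_prop

theorem divg_matrix_mulVec_add (σ : Matrix (Fin d) (Fin d) ℝ) {U W : (Fin d → ℝ) → Fin d → ℝ}
    (hU : ∀ j, DifferentiableAt ℝ (U · j) x) (hW : ∀ j, DifferentiableAt ℝ (W · j) x) :
    divg (fun y i => ∑ j, σ i j * (U y j + W y j)) x
      = divg (fun y i => ∑ j, σ i j * U y j) x + divg (fun y i => ∑ j, σ i j * W y j) x := by
  simp only [mul_add, Finset.sum_add_distrib]
  exact divg_add (differentiableAt_matrix_mulVec σ hU) (differentiableAt_matrix_mulVec σ hW)

theorem divg_matrix_mulVec_eq_trHess {σ : Matrix (Fin d) (Fin d) ℝ} {g : (Fin d → ℝ) → ℝ}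
    (hg : ContDiff ℝ 2 g) {Z : (Fin d → ℝ) → Fin d → ℝ}
    (hZ : ∀ y j, ∑ i, σ i j * pder i g y = Z y j) (x : Fin d → ℝ) :
    divg (fun y i => ∑ j, σ i j * Z y j) x = trHess (σ * σ.transpose) g x := by
  have hZ' : Z = fun y j => ∑ k, σ k j * pder k g y := by
    funext y j
    exact (hZ y j).symm
  subst hZ'
  have hdiff (j : Fin d) : DifferentiableAt ℝ (fun y => ∑ k, σ k j * pder k g y) x :=
    differentiableAt_matrix_mulVec σ.transpose
      (fun k => (differentiable_pder hg k).differentiableAt) j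
  calc divg (fun y i => ∑ j, σ i j * ∑ k, σ k j * pder k g y) x
      = ∑ i, ∑ j, σ i j * ∑ k, σ k j * hess2 g x i k := by
        simp only [divg, pder_linearCombination _ hdiff,
          pder_linearCombination _ fun k => (differentiable_pder hg k).differentiableAt, hess2]
    _ = trHess (σ * σ.transpose) g x := by
        simp only [trHess, Matrix.mul_apply, Matrix.transpose_apply, Finset.mul_sum,
          Finset.sum_mul]
        refine Finset.sum_congr rfl fun i _ => Finset.sum_comm.trans ?_
        simp only [mul_assoc]

end Divergence

theorem sum_mul_sub_sub_half_sum_sq {ι : Type*} (s : Finset ι) (a b w : ι → ℝ) :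
    ∑ j ∈ s, (a j + b j) * (a j - w j) - 1 / 2 * ∑ j ∈ s, (a j + b j) ^ 2
      = -∑ j ∈ s, (a j + b j) * (w j + (b j - a j) / 2) := by
  rw [Finset.mul_sum, ← Finset.sum_sub_distrib, ← Finset.sum_neg_distrib]
  exact Finset.sum_congr rfl fun j _ => by ring

theorem bsde_bridge_integrand_identity_general {d : ℕ}
    (u v w f : (Fin d → ℝ) → ℝ → Fin d → ℝ)
    (σ : Matrix (Fin d) (Fin d) ℝ)
    (V : (Fin d → ℝ) → ℝ → ℝ)
    (hV : ∀ t, ContDiff ℝ 2 (fun y => V y t))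
    (hu : ∀ t i, ContDiff ℝ 1 (fun y => u y t i))
    (hv : ∀ t i, ContDiff ℝ 1 (fun y => v y t i))
    (hf : ∀ t i, ContDiff ℝ 1 (fun y => f y t i))
    -- Nelson's relation σᵀ∇V = u + v:
    (hNelson : ∀ (x : Fin d → ℝ) (t : ℝ) (j : Fin d),
        (∑ i, σ i j * pder i (fun y => V y t) x) = u x t j + v x t j) :
    ∀ (x : Fin d → ℝ) (t : ℝ),
      divg (fun y i => f y t i + ∑ j, σ i j * u y t j) x
        + (∑ j, (∑ i, σ i j * pder i (fun y => V y t) x) * (u x t j - w x t j))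
        - (1 / 2) * sigGradSq σ (fun y => V y t) x
        - trHess (σ * σ.transpose) (fun y => V y t) x
      = divg (fun y i => f y t i - ∑ j, σ i j * v y t j) x
        - ∑ j, (u x t j + v x t j) * (w x t j + (v x t j - u x t j) / 2) := by
  intro x t
  have hud (j : Fin d) := ((hu t j).differentiable one_ne_zero).differentiableAt (x := x)
  have hvd (j : Fin d) := ((hv t j).differentiable one_ne_zero).differentiableAt (x := x)
  have hfd (i : Fin d) := ((hf t i).differentiable one_ne_zero).differentiableAt (x := x)
  have htrace := divg_matrix_mulVec_eq_trHess (hV t) (fun y j => hNelson y t j) x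
  rw [divg_matrix_mulVec_add σ hud hvd] at htrace
  have hquad := sum_mul_sub_sub_half_sum_sq Finset.univ (u x t) (v x t) (w x t)
  rw [divg_add hfd (differentiableAt_matrix_mulVec σ hud),
    divg_sub hfd (differentiableAt_matrix_mulVec σ hvd)]
  simp only [sigGradSq, hNelson x t]
  linarith

/-- the pointwise integrand identity behind the equivalence of the logFP-BSDE
loss and the bridge loss, under Nelson's relation `σᵀ∇V = u + v`:
`div(f + σu) + σᵀ∇V·(u − w) − (1/2)‖σᵀ∇V‖² − Tr(σσᵀ∇²V)
  = div(f − σv) − (u+v)·(w + (v−u)/2)`. -/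
theorem bsde_bridge_integrand_identity {d : ℕ} (T : ℝ) (hT : 0 < T)
    (u v w f : (Fin d → ℝ) → ℝ → Fin d → ℝ)
    (σ : Matrix (Fin d) (Fin d) ℝ)
    (V : (Fin d → ℝ) → ℝ → ℝ)
    (hV : ∀ t, ContDiff ℝ 2 (fun y => V y t))
    (hu : ∀ t i, ContDiff ℝ 1 (fun y => u y t i))
    (hv : ∀ t i, ContDiff ℝ 1 (fun y => v y t i))
    (hf : ∀ t i, ContDiff ℝ 1 (fun y => f y t i))
    -- Nelson's relation σᵀ∇V = u + v:
    (hNelson : ∀ (x : Fin d → ℝ) (t : ℝ) (j : Fin d),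
        (∑ i, σ i j * pder i (fun y => V y t) x) = u x t j + v x t j) :
    ∀ (x : Fin d → ℝ) (t : ℝ),
      divg (fun y i => f y t i + ∑ j, σ i j * u y t j) x
        + (∑ j, (∑ i, σ i j * pder i (fun y => V y t) x) * (u x t j - w x t j))
        - (1 / 2) * sigGradSq σ (fun y => V y t) x
        - trHess (σ * σ.transpose) (fun y => V y t) x
      = divg (fun y i => f y t i - ∑ j, σ i j * v y t j) x
        - ∑ j, (u x t j + v x t j) * (w x t j + (v x t j - u x t j) / 2) :=
  bsde_bridge_integrand_identity_general u v w f σ V hV hu hv hf hNelson
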